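/- arXiv:math/0701391 — 5 statements merged into one kernel-verified Lean document; each statement's English description precedes it below -/
import Mathlib

section
/- If π/4 ≤ α ≤ π/2, then μ(x₁,y₁,α,x₂,y₂,β) ≥ (√2/6)·sin α, for all real x₁, y₁, x₂, y₂, β. -/
/-!
The square's opposite vertices `k = 0` and `k = 2` lie at heights `y₁ ± (√2/6) sin α` above the
line `EF`. The triangle with base `EF` and apex at height `h` has area `|h|/2`, computed by
integrating its horizontal slices. If the two vertices lie on opposite sides of `EF`, their two
triangles meet only along `EF` and their areas add up to half the height difference
`(√2/3) |sin α|`; otherwise the farther vertex alone already gives a triangle of at least that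
area. So `μ ≥ (√2/6) |sin α|`.
-/

open Real MeasureTheory

noncomputable def pt (x y : ℝ) : EuclideanSpace ℝ (Fin 2) :=
  (WithLp.equiv 2 (Fin 2 → ℝ)).symm ![x, y]

noncomputable def sqVertex (x y a : ℝ) (k : Fin 4) : EuclideanSpace ℝ (Fin 2) :=
  pt (x + Real.sqrt 2 / 6 * Real.cos (a + ((k : ℕ) : ℝ) * (Real.pi / 2)))
     (y + Real.sqrt 2 / 6 * Real.sin (a + ((k : ℕ) : ℝ) * (Real.pi / 2)))

noncomputable def triVertex (x y b : ℝ) (k : Fin 3) : EuclideanSpace ℝ (Fin 2) :=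
  pt (x + Real.sqrt 3 / 6 * Real.cos (b + ((k : ℕ) : ℝ) * (2 * Real.pi / 3)))
     (y + Real.sqrt 3 / 6 * Real.sin (b + ((k : ℕ) : ℝ) * (2 * Real.pi / 3)))

noncomputable def config (x1 y1 a x2 y2 b : ℝ) : Set (EuclideanSpace ℝ (Fin 2)) :=
  {pt 0 0, pt 1 0} ∪ Set.range (sqVertex x1 y1 a) ∪ Set.range (triVertex x2 y2 b)

noncomputable def area (x1 y1 a x2 y2 b : ℝ) : ℝ :=
  (volume (convexHull ℝ (config x1 y1 a x2 y2 b))).toReal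

open Set
open scoped Interval

-- Height first, so that `regionBetween` cuts into horizontal slices.
noncomputable def coordSwap : EuclideanSpace ℝ (Fin 2) ≃ᵐ ℝ × ℝ :=
  ((MeasurableEquiv.toLp 2 (Fin 2 → ℝ)).symm.trans MeasurableEquiv.finTwoArrow).trans
    MeasurableEquiv.prodComm

lemma coordSwap_symm_apply (y x : ℝ) : coordSwap.symm (y, x) = pt x y := rfl

lemma measurePreserving_coordSwap : MeasurePreserving coordSwap volume volume := by
  have hswap : MeasurePreserving (MeasurableEquiv.prodComm : ℝ × ℝ ≃ᵐ ℝ × ℝ) volume volume := by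
    rw [Measure.volume_eq_prod]
    exact Measure.measurePreserving_swap
  exact hswap.comp ((volume_preserving_finTwoArrow ℝ).comp
    (EuclideanSpace.volume_preserving_symm_measurableEquiv_toLp (Fin 2)))

-- The weights are the barycentric coordinates of `pt x (l * h)` with respect to `E`, `F`, `pt u h`.
lemma mem_convexHull_triangle {u h x l : ℝ} (hl : l ∈ Icc (0 : ℝ) 1) (hux : u * l ≤ x)
    (hxu : x ≤ 1 + (u - 1) * l) : pt x (l * h) ∈ convexHull ℝ {pt 0 0, pt 1 0, pt u h} := by
  have hcomb := (convex_convexHull ℝ ({pt 0 0, pt 1 0, pt u h} : Set _)).sum_mem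
    (t := Finset.univ) (w := ![1 - l - (x - u * l), x - u * l, l]) (z := ![pt 0 0, pt 1 0, pt u h])
    (by intro i _; fin_cases i <;> simp <;> linarith [hl.1, hl.2])
    (by simp [Fin.sum_univ_three])
    (by intro i _; fin_cases i <;> exact subset_convexHull ℝ _ (by simp))
  convert hcomb using 1
  ext i
  fin_cases i <;> simp [Fin.sum_univ_three, pt]
  ring

lemma div_mem_Icc_of_mem_uIoc {y h : ℝ} (hy : y ∈ Ι 0 h) : y / h ∈ Icc (0 : ℝ) 1 := by
  rcases le_total 0 h with hh | hh
  · rw [uIoc_of_le hh] at hy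
    exact ⟨div_nonneg hy.1.le hh, div_le_one_of_le₀ hy.2 hh⟩
  · rw [uIoc_of_ge hh] at hy
    have hh' : h < 0 := hy.1.trans_le hy.2
    exact ⟨div_nonneg_of_nonpos hy.2 hh'.le, (div_le_one_of_neg hh').2 hy.1.le⟩

-- The triangle `E F (u, h)`, up to part of its boundary, in the coordinates of `coordSwap`.
noncomputable def triangleSlices (u h : ℝ) : Set (ℝ × ℝ) :=
  regionBetween (fun y => u * (y / h)) (fun y => 1 + (u - 1) * (y / h)) (Ι 0 h)

lemma preimage_triangleSlices_subset (u h : ℝ) :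
    coordSwap ⁻¹' triangleSlices u h ⊆ convexHull ℝ {pt 0 0, pt 1 0, pt u h} := by
  rintro z ⟨hy, hx⟩
  set y := (coordSwap z).1
  set x := (coordSwap z).2
  have hz : z = pt x y := by rw [← coordSwap_symm_apply]; exact (coordSwap.symm_apply_apply z).symm
  have hh : h ≠ 0 := by rintro rfl; simp at hy
  rw [hz, ← div_mul_cancel₀ y hh]
  exact mem_convexHull_triangle (div_mem_Icc_of_mem_uIoc hy) hx.1.le hx.2.le

lemma volume_triangleSlices (u h : ℝ) : volume (triangleSlices u h) = ENNReal.ofReal (|h| / 2) := by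
  have hle : ∀ y ∈ Ι 0 h, u * (y / h) ≤ 1 + (u - 1) * (y / h) := fun y hy => by
    linarith [(div_mem_Icc_of_mem_uIoc hy).2]
  rw [triangleSlices, Measure.volume_eq_prod, volume_regionBetween_eq_integral
    (by fun_prop : Continuous fun y : ℝ => u * (y / h)).integrableOn_uIoc
    (by fun_prop : Continuous fun y : ℝ => 1 + (u - 1) * (y / h)).integrableOn_uIoc
    measurableSet_uIoc hle]
  congr 1
  have hintegral : ∫ y in (0 : ℝ)..h, (1 - y / h) = h / 2 := by
    simp only [intervalIntegral.integral_sub intervalIntegrable_const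
      (intervalIntegral.intervalIntegrable_id.div_const h), intervalIntegral.integral_div,
      integral_id, intervalIntegral.integral_const]
    rw [div_right_comm, sub_zero, zero_pow two_ne_zero, sub_zero, sq, mul_self_div_self,
      smul_eq_mul]
    ring
  have hnonneg : 0 ≤ ∫ y in Ι 0 h, (1 - y / h) := setIntegral_nonneg measurableSet_uIoc
    fun y hy => by linarith [(div_mem_Icc_of_mem_uIoc hy).2]
  calc ∫ y in Ι 0 h, ((fun y => 1 + (u - 1) * (y / h)) - fun y => u * (y / h)) y
      = ∫ y in Ι 0 h, (1 - y / h) := by congr 1; ext y; simp only [Pi.sub_apply]; ring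
    _ = |h| / 2 := by
      rw [← abs_of_nonneg hnonneg, ← intervalIntegral.abs_integral_eq_abs_integral_uIoc, hintegral,
        abs_div, abs_two]

lemma measurableSet_triangleSlices (u h : ℝ) : MeasurableSet (triangleSlices u h) :=
  measurableSet_regionBetween (by fun_prop) (by fun_prop) measurableSet_uIoc

lemma volume_preimage_triangleSlices (u h : ℝ) :
    volume (coordSwap ⁻¹' triangleSlices u h) = ENNReal.ofReal (|h| / 2) := by
  rw [measurePreserving_coordSwap.measure_preimage_equiv, volume_triangleSlices]

section HullOfBase

variable {s : Set (EuclideanSpace ℝ (Fin 2))}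

lemma preimage_triangleSlices_subset_convexHull {u h : ℝ} (hE : pt 0 0 ∈ s) (hF : pt 1 0 ∈ s)
    (hP : pt u h ∈ s) : coordSwap ⁻¹' triangleSlices u h ⊆ convexHull ℝ s :=
  (preimage_triangleSlices_subset u h).trans
    (convexHull_mono (insert_subset hE (insert_subset hF (singleton_subset_iff.2 hP))))

lemma ofReal_abs_sub_div_two_le_volume_convexHull {u v p q : ℝ} (hE : pt 0 0 ∈ s)
    (hF : pt 1 0 ∈ s) (hP : pt u p ∈ s) (hQ : pt v q ∈ s) :
    ENNReal.ofReal (|p - q| / 2) ≤ volume (convexHull ℝ s) := by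
  wlog hqp : q ≤ p generalizing u v p q
  · rw [abs_sub_comm]
    exact this hQ hP (le_of_not_ge hqp)
  have single : ∀ {w r : ℝ}, pt w r ∈ s → |p - q| ≤ |r| →
      ENNReal.ofReal (|p - q| / 2) ≤ volume (convexHull ℝ s) := fun {w r} hR hr => calc
    ENNReal.ofReal (|p - q| / 2) ≤ ENNReal.ofReal (|r| / 2) :=
        ENNReal.ofReal_le_ofReal (by linarith)
    _ = volume (coordSwap ⁻¹' triangleSlices w r) := (volume_preimage_triangleSlices w r).symm
    _ ≤ volume (convexHull ℝ s) := measure_mono (preimage_triangleSlices_subset_convexHull hE hF hR)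
  rw [abs_of_nonneg (sub_nonneg.2 hqp)] at single ⊢
  rcases le_or_gt 0 q with hq | hq
  · exact single hP (by rw [abs_of_nonneg (hq.trans hqp)]; linarith)
  rcases le_or_gt p 0 with hp | hp
  · exact single hQ (by rw [abs_of_neg hq]; linarith)
  have hdisj : Disjoint (coordSwap ⁻¹' triangleSlices u p) (coordSwap ⁻¹' triangleSlices v q) := by
    rw [disjoint_left]
    rintro z ⟨hzp, -⟩ ⟨hzq, -⟩
    rw [uIoc_of_le hp.le] at hzp
    rw [uIoc_of_ge hq.le] at hzq
    exact absurd (hzp.1.trans_le hzq.2) (lt_irrefl 0)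
  calc ENNReal.ofReal ((p - q) / 2) = ENNReal.ofReal (|p| / 2) + ENNReal.ofReal (|q| / 2) := by
        rw [← ENNReal.ofReal_add (by positivity) (by positivity), abs_of_pos hp, abs_of_neg hq]
        ring_nf
    _ = volume (coordSwap ⁻¹' triangleSlices u p ∪ coordSwap ⁻¹' triangleSlices v q) := by
        rw [measure_union hdisj ((measurableSet_triangleSlices v q).preimage coordSwap.measurable),
          volume_preimage_triangleSlices, volume_preimage_triangleSlices]
    _ ≤ volume (convexHull ℝ s) := measure_mono (union_subset
        (preimage_triangleSlices_subset_convexHull hE hF hP)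
        (preimage_triangleSlices_subset_convexHull hE hF hQ))

end HullOfBase

lemma sqVertex_zero (x y a : ℝ) :
    sqVertex x y a 0 = pt (x + √2 / 6 * cos a) (y + √2 / 6 * sin a) := by
  simp [sqVertex]

lemma sqVertex_two (x y a : ℝ) :
    sqVertex x y a 2 = pt (x - √2 / 6 * cos a) (y - √2 / 6 * sin a) := by
  have hangle : a + (((2 : Fin 4) : ℕ) : ℝ) * (π / 2) = a + π := by norm_num; ring
  rw [sqVertex, hangle, cos_add_pi, sin_add_pi, mul_neg, mul_neg, ← sub_eq_add_neg,
    ← sub_eq_add_neg]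

lemma finite_config (x1 y1 a x2 y2 b : ℝ) : (config x1 y1 a x2 y2 b).Finite :=
  (((finite_singleton _).insert _).union (finite_range _)).union (finite_range _)

theorem area_ge_square_height_general (x1 y1 a x2 y2 b : ℝ) :
    area x1 y1 a x2 y2 b ≥ Real.sqrt 2 / 6 * Real.sin a := by
  have hsq : ∀ k, sqVertex x1 y1 a k ∈ config x1 y1 a x2 y2 b := fun k => .inl (.inr ⟨k, rfl⟩)
  have hbound := ofReal_abs_sub_div_two_le_volume_convexHull (.inl (.inl (mem_insert _ _)))
    (.inl (.inl (mem_insert_of_mem _ rfl))) (sqVertex_zero x1 y1 a ▸ hsq 0)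
    (sqVertex_two x1 y1 a ▸ hsq 2)
  have hheight : |y1 + √2 / 6 * sin a - (y1 - √2 / 6 * sin a)| / 2 = |√2 / 6 * sin a| := by
    rw [show y1 + √2 / 6 * sin a - (y1 - √2 / 6 * sin a) = 2 * (√2 / 6 * sin a) by ring, abs_mul,
      abs_two, mul_div_cancel_left₀ _ two_ne_zero]
  rw [area, ge_iff_le, ← ENNReal.ofReal_le_iff_le_toReal
    ((finite_config x1 y1 a x2 y2 b).isCompact_convexHull ℝ |>.measure_lt_top.ne)]
  exact (ENNReal.ofReal_le_ofReal ((le_abs_self _).trans hheight.ge)).trans hbound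

theorem area_ge_square_height (x1 y1 a x2 y2 b : ℝ)
    (ha : Real.pi / 4 ≤ a) (ha' : a ≤ Real.pi / 2) :
    area x1 y1 a x2 y2 b ≥ Real.sqrt 2 / 6 * Real.sin a :=
  area_ge_square_height_general x1 y1 a x2 y2 b
end

section
/- Let d₁ ≥ 0 and 0 ≤ d₂ ≤ 2π, and let (x, y, γ) and (δ₁, δ₂, θ) be real triples with |δ₁| ≤ d₁/2, |δ₂| ≤ d₁/2 and |θ| ≤ d₂/2. Then for each k = 0,1,2, the distance between the k-th vertex of T(x+δ₁, y+δ₂, γ+θ) and the k-th vertex of T(x, y, γ) is at most d₁/√2 + sin(d₂/4)/√3; and for each k = 0,1,2,3, the distance between the k-th vertex of S(x+δ₁, y+δ₂, γ+θ) and the k-th vertex of S(x, y, γ) is at most d₁/√2 + (√2/3)·sin(d₂/4). -/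
/-!
Every vertex of `T` or `S` lies on a circle of radius `r` (`√3/6`, resp. `√2/6`) around the
centre, at an angle shifted by a fixed multiple of `2π/3`, resp. `π/2`. Perturbing the
parameters first rotates the vertex by `θ` about the old centre, which moves it along a chord
of length `2r|sin(θ/2)| ≤ 2r sin(d₂/4)`, and then translates it by `(δ₁, δ₂)`, of length at
most `d₁/√2`; the triangle inequality adds the two.
-/

open Real MeasureTheory

lemma dist_pt (a b c d : ℝ) : dist (pt a b) (pt c d) = √((a - c) ^ 2 + (b - d) ^ 2) := by
  simp [pt, EuclideanSpace.dist_eq, Fin.sum_univ_two, Real.dist_eq, sq_abs]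

lemma sqrt_sq_add_sq_le {a b t : ℝ} (ha : |a| ≤ t) (hb : |b| ≤ t) :
    √(a ^ 2 + b ^ 2) ≤ √2 * t := by
  have ht : 0 ≤ t := (abs_nonneg a).trans ha
  rw [← sqrt_sq ht, ← sqrt_mul zero_le_two]
  gcongr
  nlinarith [sq_le_sq.mpr (ha.trans_eq (abs_of_nonneg ht).symm),
    sq_le_sq.mpr (hb.trans_eq (abs_of_nonneg ht).symm)]

lemma abs_sin_le_sin_of_abs_le {x y : ℝ} (hxy : |x| ≤ y) (hy : y ≤ π / 2) : |sin x| ≤ sin y := by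
  obtain ⟨hyx, hxy⟩ := abs_le.mp hxy
  refine abs_le.mpr ⟨?_, sin_le_sin_of_le_of_le_pi_div_two (by linarith) hy hxy⟩
  rw [← sin_neg]
  exact sin_le_sin_of_le_of_le_pi_div_two (by linarith) (by linarith) hyx

noncomputable def polarPt (x y r A : ℝ) : EuclideanSpace ℝ (Fin 2) :=
  pt (x + r * cos A) (y + r * sin A)

lemma dist_polarPt_translate (x y δ₁ δ₂ r A : ℝ) :
    dist (polarPt (x + δ₁) (y + δ₂) r A) (polarPt x y r A) = √(δ₁ ^ 2 + δ₂ ^ 2) := by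
  rw [polarPt, polarPt, dist_pt]
  ring_nf

lemma dist_polarPt_rotate (x y r A θ : ℝ) :
    dist (polarPt x y r (A + θ)) (polarPt x y r A) = 2 * |r| * |sin (θ / 2)| := by
  have chord : (x + r * cos (A + θ) - (x + r * cos A)) ^ 2
      + (y + r * sin (A + θ) - (y + r * sin A)) ^ 2 = (2 * r * sin (θ / 2)) ^ 2 := by
    have hcos : cos θ = cos (A + θ) * cos A + sin (A + θ) * sin A := by
      rw [← cos_sub, add_sub_cancel_left]
    have hhalf : sin (θ / 2) ^ 2 = 1 / 2 - cos θ / 2 := by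
      rw [sin_sq_eq_half_sub, mul_div_cancel₀ θ two_ne_zero]
    linear_combination r ^ 2 * sin_sq_add_cos_sq A + r ^ 2 * sin_sq_add_cos_sq (A + θ)
      + 2 * r ^ 2 * hcos - 4 * r ^ 2 * hhalf
  rw [polarPt, polarPt, dist_pt, chord, sqrt_sq_eq_abs, abs_mul, abs_mul, abs_two]

lemma dist_polarPt_perturb_le {d₁ d₂ x y δ₁ δ₂ θ r A : ℝ} (hr : 0 ≤ r) (hd₂ : d₂ ≤ 2 * π)
    (h₁ : |δ₁| ≤ d₁ / 2) (h₂ : |δ₂| ≤ d₁ / 2) (hθ : |θ| ≤ d₂ / 2) :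
    dist (polarPt (x + δ₁) (y + δ₂) r (A + θ)) (polarPt x y r A) ≤
      d₁ / √2 + 2 * r * sin (d₂ / 4) := by
  have translate : dist (polarPt (x + δ₁) (y + δ₂) r (A + θ)) (polarPt x y r (A + θ)) ≤
      d₁ / √2 := by
    have half : d₁ / √2 = √2 * (d₁ / 2) := by
      field_simp
      rw [sq_sqrt zero_le_two]
    rw [dist_polarPt_translate, half]
    exact sqrt_sq_add_sq_le h₁ h₂
  have rotate : dist (polarPt x y r (A + θ)) (polarPt x y r A) ≤ 2 * r * sin (d₂ / 4) := by
    rw [dist_polarPt_rotate, abs_of_nonneg hr]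
    gcongr
    exact abs_sin_le_sin_of_abs_le (by rw [abs_div, abs_two]; linarith) (by linarith)
  linarith [dist_triangle (polarPt (x + δ₁) (y + δ₂) r (A + θ)) (polarPt x y r (A + θ))
    (polarPt x y r A)]

lemma triVertex_eq_polarPt (x y b : ℝ) (k : Fin 3) :
    triVertex x y b k = polarPt x y (√3 / 6) (b + ((k : ℕ) : ℝ) * (2 * π / 3)) := rfl

lemma sqVertex_eq_polarPt (x y a : ℝ) (k : Fin 4) :
    sqVertex x y a k = polarPt x y (√2 / 6) (a + ((k : ℕ) : ℝ) * (π / 2)) := rfl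

theorem vertex_perturbation_bound_general (d1 d2 x y γ δ1 δ2 θ : ℝ)
    (hd2' : d2 ≤ 2 * Real.pi)
    (h1 : |δ1| ≤ d1 / 2) (h2 : |δ2| ≤ d1 / 2) (h3 : |θ| ≤ d2 / 2) :
    (∀ k : Fin 3, dist (triVertex (x + δ1) (y + δ2) (γ + θ) k) (triVertex x y γ k) ≤
      d1 / Real.sqrt 2 + Real.sin (d2 / 4) / Real.sqrt 3) ∧
    (∀ k : Fin 4, dist (sqVertex (x + δ1) (y + δ2) (γ + θ) k) (sqVertex x y γ k) ≤
      d1 / Real.sqrt 2 + Real.sqrt 2 / 3 * Real.sin (d2 / 4)) := by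
  refine ⟨fun k => ?_, fun k => ?_⟩
  · have hr : Real.sin (d2 / 4) / √3 = 2 * (√3 / 6) * Real.sin (d2 / 4) := by
      field_simp
      rw [sq_sqrt zero_le_three]
      ring
    rw [triVertex_eq_polarPt, triVertex_eq_polarPt, add_right_comm γ, hr]
    exact dist_polarPt_perturb_le (by positivity) hd2' h1 h2 h3
  · rw [sqVertex_eq_polarPt, sqVertex_eq_polarPt, add_right_comm γ,
      show √2 / 3 * Real.sin (d2 / 4) = 2 * (√2 / 6) * Real.sin (d2 / 4) by ring]
    exact dist_polarPt_perturb_le (by positivity) hd2' h1 h2 h3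

theorem vertex_perturbation_bound (d1 d2 x y γ δ1 δ2 θ : ℝ)
    (hd1 : 0 ≤ d1) (hd2 : 0 ≤ d2) (hd2' : d2 ≤ 2 * Real.pi)
    (h1 : |δ1| ≤ d1 / 2) (h2 : |δ2| ≤ d1 / 2) (h3 : |θ| ≤ d2 / 2) :
    (∀ k : Fin 3, dist (triVertex (x + δ1) (y + δ2) (γ + θ) k) (triVertex x y γ k) ≤
      d1 / Real.sqrt 2 + Real.sin (d2 / 4) / Real.sqrt 3) ∧
    (∀ k : Fin 4, dist (sqVertex (x + δ1) (y + δ2) (γ + θ) k) (sqVertex x y γ k) ≤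
      d1 / Real.sqrt 2 + Real.sqrt 2 / 3 * Real.sin (d2 / 4)) :=
  vertex_perturbation_bound_general d1 d2 x y γ δ1 δ2 θ hd2' h1 h2 h3
end

section
/- For every point c ∈ ℝ² with ‖c‖ ≥ 1/6, the 2-dimensional Lebesgue measure of the convex hull of {(0,0)} ∪ B̄(c, 1/6) is at least √(‖c‖²/36 − 1/1296), where B̄(c, 1/6) is the closed disk of radius 1/6 centered at c. -/
open Real MeasureTheory

/-!
The hull contains the isosceles triangle with apex `0` whose base is the diameter of the disk
perpendicular to `c`; its area is `‖c‖ / 6 ≥ √(‖c‖² / 36 - 1 / 1296)`. Identifying the plane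
with `ℂ`, this triangle is the image of a fixed triangle under multiplication by `c`, a linear
map with determinant `|c|²`.
-/

open Set Metric Complex Module

namespace Complex

/-- The triangle with vertices `0`, `1 ± s * I`, up to part of its boundary. -/
def isoscelesTriangle (s : ℝ) : Set ℂ :=
  {z | z.re ∈ Ioc 0 1 ∧ z.im ∈ Ioo (-(s * z.re)) (s * z.re)}

theorem volume_isoscelesTriangle {s : ℝ} (hs : 0 ≤ s) :
    volume (isoscelesTriangle s) = ENNReal.ofReal s := by
  have hT : isoscelesTriangle s =
      measurableEquivRealProd ⁻¹' regionBetween (fun x => -(s * x)) (fun x => s * x) (Ioc 0 1) :=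
    rfl
  have hlow : Continuous fun x : ℝ => -(s * x) := by fun_prop
  have hupp : Continuous fun x : ℝ => s * x := by fun_prop
  rw [hT, volume_preserving_equiv_real_prod.measure_preimage
      (measurableSet_regionBetween hlow.measurable hupp.measurable
        measurableSet_Ioc).nullMeasurableSet,
    Measure.volume_eq_prod, volume_regionBetween_eq_integral hlow.integrableOn_Ioc
      hupp.integrableOn_Ioc measurableSet_Ioc fun x hx => by nlinarith [hx.1]]
  congr 1
  calc ∫ x in Ioc (0 : ℝ) 1, ((fun x => s * x) - fun x => -(s * x)) x
      = ∫ x in (0 : ℝ)..1, 2 * s * x := by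
        rw [intervalIntegral.integral_of_le zero_le_one]
        congr 1 with x
        simp only [Pi.sub_apply]
        ring
    _ = s := by rw [intervalIntegral.integral_const_mul, integral_id]; ring

theorem mul_mem_convexHull_zero_union_closedBall {c z : ℂ} {ρ : ℝ} (hre : z.re ∈ Ioc 0 1)
    (him : ‖c‖ * |z.im| ≤ ρ * z.re) :
    c * z ∈ convexHull ℝ ({0} ∪ closedBall c ρ) := by
  have hball : c + (z.im / z.re : ℝ) * (c * I) ∈ closedBall c ρ := by
    rw [mem_closedBall, dist_eq_norm, add_sub_cancel_left, norm_mul, norm_mul, norm_I, mul_one,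
      norm_real, Real.norm_eq_abs, abs_div, abs_of_pos hre.1, div_mul_eq_mul_div,
      div_le_iff₀ hre.1, mul_comm]
    exact him
  -- `c * z` lies on the segment from `0` to a point of the disk.
  have hcz : c * z = z.re • (c + (z.im / z.re : ℝ) * (c * I)) := by
    have : (z.re : ℂ) ≠ 0 := ofReal_ne_zero.mpr hre.1.ne'
    conv_lhs => rw [← re_add_im z]
    rw [real_smul]
    push_cast
    field_simp
  rw [hcz]
  exact (convex_convexHull ℝ _).smul_mem_of_zero_mem
    (subset_convexHull ℝ _ (Or.inl rfl : (0 : ℂ) ∈ _)) (subset_convexHull ℝ _ (Or.inr hball))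
    ⟨hre.1.le, hre.2⟩

theorem ofReal_mul_norm_le_volume_convexHull (c : ℂ) {ρ : ℝ} (hρ : 0 ≤ ρ) :
    ENNReal.ofReal (ρ * ‖c‖) ≤ volume (convexHull ℝ ({0} ∪ closedBall c ρ)) := by
  rcases eq_or_ne c 0 with rfl | hc
  · simp
  have hc : 0 < ‖c‖ := norm_pos_iff.mpr hc
  have hsub : (c * ·) '' isoscelesTriangle (ρ / ‖c‖) ⊆ convexHull ℝ ({0} ∪ closedBall c ρ) := by
    rintro _ ⟨z, ⟨hre, him⟩, rfl⟩
    refine mul_mem_convexHull_zero_union_closedBall hre ?_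
    have : |z.im| ≤ ρ / ‖c‖ * z.re := abs_le.mpr ⟨by linarith [him.1], him.2.le⟩
    calc ‖c‖ * |z.im| ≤ ‖c‖ * (ρ / ‖c‖ * z.re) := by gcongr
      _ = ρ * z.re := by field_simp
  have hvol : volume ((c * ·) '' isoscelesTriangle (ρ / ‖c‖)) = ENNReal.ofReal (ρ * ‖c‖) := by
    change volume (Algebra.lmul ℝ ℂ c '' _) = _
    rw [Measure.addHaar_image_linearMap, ← Algebra.norm_apply, Algebra.norm_complex_apply,
      volume_isoscelesTriangle (by positivity), ← ENNReal.ofReal_mul (abs_nonneg _),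
      abs_of_nonneg (normSq_nonneg c), normSq_eq_norm_sq]
    congr 1
    field_simp
  exact hvol ▸ measure_mono hsub

end Complex

theorem ofReal_mul_norm_le_volume_convexHull {E : Type*} [NormedAddCommGroup E]
    [InnerProductSpace ℝ E] [FiniteDimensional ℝ E] [MeasurableSpace E] [BorelSpace E]
    (hE : finrank ℝ E = 2) (c : E) {ρ : ℝ} (hρ : 0 ≤ ρ) :
    ENNReal.ofReal (ρ * ‖c‖) ≤ volume (convexHull ℝ ({0} ∪ closedBall c ρ)) := by
  let f : ℂ ≃ₗᵢ[ℝ] E :=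
    Complex.isometryOfOrthonormal ((stdOrthonormalBasis ℝ E).reindex (finCongr hE))
  have hpre : f ⁻¹' convexHull ℝ ({0} ∪ closedBall c ρ) =
      convexHull ℝ ({0} ∪ closedBall (f.symm c) ρ) := by
    have := f.symm.toLinearEquiv.toLinearMap.image_convexHull ({0} ∪ closedBall c ρ)
    simp only [LinearEquiv.coe_coe, LinearIsometryEquiv.coe_toLinearEquiv, image_union,
      image_singleton, map_zero, f.symm.image_closedBall] at this
    rw [← this, f.symm.image_eq_preimage_symm, LinearIsometryEquiv.symm_symm]
  rw [← f.measurePreserving.measure_preimage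
    ((convex_convexHull ℝ _).nullMeasurableSet _), hpre, ← f.symm.norm_map c]
  exact Complex.ofReal_mul_norm_le_volume_convexHull _ hρ

theorem hull_disk_origin_area_general (c : EuclideanSpace ℝ (Fin 2)) :
    (volume (convexHull ℝ ({(0 : EuclideanSpace ℝ (Fin 2))} ∪
        Metric.closedBall c (1 / 6)))).toReal ≥
      Real.sqrt (‖c‖ ^ 2 / 36 - 1 / 1296) := by
  have hfin : volume (convexHull ℝ ({(0 : EuclideanSpace ℝ (Fin 2))} ∪
      closedBall c (1 / 6))) ≠ ⊤ :=
    (isBounded_convexHull.mpr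
      (Bornology.isBounded_singleton.union isBounded_closedBall)).measure_lt_top.ne
  have hlow := ENNReal.toReal_mono hfin <|
    ofReal_mul_norm_le_volume_convexHull finrank_euclideanSpace_fin c (by norm_num)
  rw [ENNReal.toReal_ofReal (by positivity)] at hlow
  calc Real.sqrt (‖c‖ ^ 2 / 36 - 1 / 1296) ≤ Real.sqrt ((1 / 6 * ‖c‖) ^ 2) :=
        Real.sqrt_le_sqrt (by nlinarith)
    _ = 1 / 6 * ‖c‖ := Real.sqrt_sq (by positivity)
    _ ≤ _ := hlow

theorem hull_disk_origin_area (c : EuclideanSpace ℝ (Fin 2)) (hc : 1 / 6 ≤ ‖c‖) :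
    (volume (convexHull ℝ ({(0 : EuclideanSpace ℝ (Fin 2))} ∪
        Metric.closedBall c (1 / 6)))).toReal ≥
      Real.sqrt (‖c‖ ^ 2 / 36 - 1 / 1296) :=
  hull_disk_origin_area_general c
end

section
/- For every point c ∈ ℝ² with ‖c‖² ≥ 1.4, the 2-dimensional Lebesgue measure of the convex hull of {(0,0)} ∪ B̄(c, 1/6) is greater than 0.23, where B̄(c, 1/6) is the closed disk of radius 1/6 centered at c. -/
open Real MeasureTheory

/-! The hull contains the triangle with apex `0` whose base is the diameter of the disk
perpendicular to `c`, of area `‖c‖ r`, and the half of the disk beyond that diameter, of area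
`π r² / 2`; the two pieces meet only along a line. Both areas are bounded below by point
reflections: a triangle and its reflection through the midpoint of a side cover a parallelogram,
and a half-disk and its reflection through the centre cover the disk. For `r = 1/6` and
`‖c‖ ≥ 1.18` this gives more than `0.196 + 0.041 > 0.23`. -/

open Metric Set

section PointReflection

variable {G : Type*} [AddGroup G] [MeasurableSpace G] [MeasurableAdd G] [MeasurableNeg G]
  (μ : Measure G) [μ.IsAddLeftInvariant] [μ.IsNegInvariant]

theorem measure_le_two_mul_of_subset_union_preimage_sub_left {s t : Set G} (a : G)
    (h : t ⊆ s ∪ (fun x => a - x) ⁻¹' s) : μ t ≤ 2 * μ s := by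
  have hσ : μ ((fun x => a - x) ⁻¹' s) = μ s := by
    simp_rw [sub_eq_add_neg]
    exact (Measure.measure_preimage_neg μ _).trans (measure_preimage_add μ a s)
  calc μ t ≤ μ (s ∪ (fun x => a - x) ⁻¹' s) := measure_mono h
    _ ≤ μ s + μ ((fun x => a - x) ⁻¹' s) := measure_union_le _ _
    _ = 2 * μ s := by rw [hσ, two_mul]

end PointReflection

section HalfBall

variable {E : Type*} [SeminormedAddCommGroup E] [Module ℝ E] [MeasurableSpace E] [MeasurableAdd E]
  [MeasurableNeg E] (μ : Measure E) [μ.IsAddLeftInvariant] [μ.IsNegInvariant]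

theorem measure_closedBall_le_two_mul_inter_halfSpace (f : E →ₗ[ℝ] ℝ) (c : E) (r : ℝ) :
    μ (closedBall c r) ≤ 2 * μ (closedBall c r ∩ {x | f c ≤ f x}) := by
  refine measure_le_two_mul_of_subset_union_preimage_sub_left μ (c + c) fun x hx => ?_
  by_cases hfx : f c ≤ f x
  · exact Or.inl ⟨hx, hfx⟩
  · refine Or.inr ⟨?_, ?_⟩
    · simpa only [mem_preimage, mem_closedBall, dist_comm x c, dist_eq_norm,
        show c + c - x - c = c - x by abel] using hx
    · show f c ≤ f (c + c - x)
      rw [map_sub, map_add]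
      linarith

end HalfBall

theorem addHaar_setOf_apply_eq_eq_zero {E : Type*} [NormedAddCommGroup E] [NormedSpace ℝ E]
    [MeasurableSpace E] [BorelSpace E] [FiniteDimensional ℝ E] (μ : Measure E)
    [μ.IsAddHaarMeasure] {f : E →ₗ[ℝ] ℝ} (hf : f ≠ 0) (c : E) :
    μ {x | f x = f c} = 0 := by
  have hset : {x | f x = f c} = (AffineSubspace.mk' c (LinearMap.ker f) : Set E) := by
    ext x
    simp [AffineSubspace.mem_mk', sub_eq_zero]
  rw [hset]
  refine Measure.addHaar_affineSubspace μ _ fun htop => hf ?_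
  have := congrArg AffineSubspace.direction htop
  rwa [AffineSubspace.direction_mk', AffineSubspace.direction_top, LinearMap.ker_eq_top] at this

section Triangle

variable {E : Type*} [AddCommGroup E] [Module ℝ E]

theorem smul_add_smul_mem_convexHull_triangle {a b : E} {s t : ℝ} (hs : 0 ≤ s) (ht : 0 ≤ t)
    (hst : s + t ≤ 1) : s • a + t • b ∈ convexHull ℝ {0, a, b} := by
  have hmem := (convex_convexHull ℝ {0, a, b}).sum_mem (t := Finset.univ)
    (w := ![1 - s - t, s, t]) (z := ![0, a, b]) ?_ ?_ ?_
  · simpa [Fin.sum_univ_three] using hmem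
  · intro i _
    fin_cases i <;> simp <;> linarith
  · simp [Fin.sum_univ_three]; ring
  · intro i _
    fin_cases i <;> exact subset_convexHull ℝ _ (by simp)

theorem parallelepiped_subset_convexHull_union_preimage_sub_left (a b : E) :
    parallelepiped ![a, b] ⊆
      convexHull ℝ {0, a, b} ∪ (fun x => (a + b) - x) ⁻¹' convexHull ℝ {0, a, b} := by
  intro x hx
  obtain ⟨t, ⟨ht0, ht1⟩, rfl⟩ := (mem_parallelepiped_iff _ _).1 hx
  have := ht0 0; have := ht0 1; have := ht1 0; have := ht1 1
  simp only [Pi.zero_apply, Pi.one_apply] at *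
  simp only [Fin.sum_univ_two, Matrix.cons_val_zero, Matrix.cons_val_one]
  by_cases hst : t 0 + t 1 ≤ 1
  · exact Or.inl (smul_add_smul_mem_convexHull_triangle (by linarith) (by linarith) hst)
  · refine Or.inr ?_
    rw [mem_preimage, show a + b - (t 0 • a + t 1 • b) = (1 - t 0) • a + (1 - t 1) • b by
      simp only [sub_smul, one_smul]; abel]
    exact smul_add_smul_mem_convexHull_triangle (by linarith) (by linarith) (by linarith)

theorem measure_parallelepiped_le_two_mul_convexHull [MeasurableSpace E] [MeasurableAdd E]
    [MeasurableNeg E] (μ : Measure E) [μ.IsAddLeftInvariant] [μ.IsNegInvariant] (a b : E) :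
    μ (parallelepiped ![a, b]) ≤ 2 * μ (convexHull ℝ {0, a, b}) :=
  measure_le_two_mul_of_subset_union_preimage_sub_left μ (a + b)
    (parallelepiped_subset_convexHull_union_preimage_sub_left a b)

end Triangle

local notation "E²" => EuclideanSpace ℝ (Fin 2)

theorem volume_parallelepiped_fin_two (a b : E²) :
    volume (parallelepiped ![a, b]) = ENNReal.ofReal |a 0 * b 1 - a 1 * b 0| := by
  rw [← (EuclideanSpace.basisFun (Fin 2) ℝ).addHaar_eq_volume, Measure.addHaar_parallelepiped,
    Module.Basis.det_apply, Matrix.det_fin_two]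
  simp [Module.Basis.toMatrix_apply, mul_comm]

theorem ofReal_abs_det_div_two_le_volume_convexHull (a b : E²) :
    ENNReal.ofReal (|a 0 * b 1 - a 1 * b 0| / 2) ≤ volume (convexHull ℝ {0, a, b}) := by
  rw [ENNReal.ofReal_div_of_pos two_pos, ← volume_parallelepiped_fin_two, ENNReal.ofReal_ofNat]
  exact ENNReal.div_le_of_le_mul' (measure_parallelepiped_le_two_mul_convexHull volume a b)

theorem exists_inner_eq_zero_norm_eq {c : E²} (hc : c ≠ 0) {r : ℝ} (hr : 0 ≤ r) :
    ∃ w : E², ‖w‖ = r ∧ inner ℝ c w = 0 ∧ c 0 * w 1 - c 1 * w 0 = ‖c‖ * r := by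
  have hc_sq : ‖c‖ ^ 2 = c 0 ^ 2 + c 1 ^ 2 := by
    simp [EuclideanSpace.norm_sq_eq, Fin.sum_univ_two]
  have hc_pos : 0 < ‖c‖ := norm_pos_iff.2 hc
  refine ⟨(r / ‖c‖) • !₂[-c 1, c 0], ?_, ?_, ?_⟩
  · rw [← sq_eq_sq₀ (norm_nonneg _) hr, EuclideanSpace.norm_sq_eq]
    simp only [Fin.sum_univ_two, Real.norm_eq_abs, sq_abs, PiLp.smul_apply, smul_eq_mul,
      Matrix.cons_val_zero, Matrix.cons_val_one]
    field_simp
    linear_combination (-r ^ 2) * hc_sq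
  · simp [PiLp.inner_apply, Fin.sum_univ_two]
    ring
  · calc _ = r / ‖c‖ * (c 0 ^ 2 + c 1 ^ 2) := by simp; ring
      _ = ‖c‖ * r := by rw [← hc_sq]; field_simp

theorem ofReal_le_volume_convexHull_zero_union_closedBall {c : E²} (hc : c ≠ 0) {r : ℝ}
    (hr : 0 ≤ r) :
    ENNReal.ofReal (‖c‖ * r + π * r ^ 2 / 2) ≤ volume (convexHull ℝ ({0} ∪ closedBall c r)) := by
  obtain ⟨w, hw, hcw, hdet⟩ := exists_inner_eq_zero_norm_eq hc hr
  set f : E² →ₗ[ℝ] ℝ := innerₛₗ ℝ c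
  have hfc : f c = ‖c‖ ^ 2 := real_inner_self_eq_norm_sq c
  have hf : f ≠ 0 := fun h => by
    simp only [h, LinearMap.zero_apply] at hfc
    nlinarith [norm_pos_iff.2 hc]
  set T : Set E² := convexHull ℝ {0, c + w, c - w}
  set D : Set E² := closedBall c r ∩ {x | f c ≤ f x}
  have hTK : T ⊆ convexHull ℝ ({0} ∪ closedBall c r) := by
    refine convexHull_mono (insert_subset (Or.inl rfl) (insert_subset (Or.inr ?_)
      (singleton_subset_iff.2 (Or.inr ?_)))) <;> simp [hw]
  have hDK : D ⊆ convexHull ℝ ({0} ∪ closedBall c r) :=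
    inter_subset_left.trans (subset_union_right.trans (subset_convexHull ℝ _))
  have hT_half : T ⊆ {x | f x ≤ f c} := by
    refine convexHull_min ?_ (convex_halfSpace_le f.isLinear _)
    rintro x (rfl | rfl | rfl) <;> simp [f, inner_add_right, inner_sub_right, hcw, hfc]
  have hTD : AEDisjoint volume T D :=
    measure_mono_null (fun x hx => le_antisymm (hT_half hx.1) hx.2.2)
      (addHaar_setOf_apply_eq_eq_zero volume hf c)
  have hT_vol : ENNReal.ofReal (‖c‖ * r) ≤ volume T := by
    have hdet' : (c + w) 0 * (c - w) 1 - (c + w) 1 * (c - w) 0 = -(2 * (‖c‖ * r)) := by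
      simp only [PiLp.add_apply, PiLp.sub_apply]
      linear_combination (-2) * hdet
    have := ofReal_abs_det_div_two_le_volume_convexHull (c + w) (c - w)
    rwa [hdet', abs_neg, abs_of_nonneg (by positivity), mul_div_cancel_left₀ _ two_ne_zero]
      at this
  have hD_vol : ENNReal.ofReal (π * r ^ 2 / 2) ≤ volume D := by
    have := measure_closedBall_le_two_mul_inter_halfSpace volume f c r
    rw [EuclideanSpace.volume_closedBall_fin_two] at this
    rw [ENNReal.ofReal_div_of_pos two_pos, ENNReal.ofReal_mul pi_pos.le, ENNReal.ofReal_pow hr,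
      mul_comm, ENNReal.ofReal_ofNat]
    exact ENNReal.div_le_of_le_mul' this
  have hT_meas : MeasurableSet T :=
    ((Set.toFinite _).isCompact_convexHull (𝕜 := ℝ)).isClosed.measurableSet
  calc ENNReal.ofReal (‖c‖ * r + π * r ^ 2 / 2)
      = ENNReal.ofReal (‖c‖ * r) + ENNReal.ofReal (π * r ^ 2 / 2) :=
        ENNReal.ofReal_add (by positivity) (by positivity)
    _ ≤ volume T + volume D := add_le_add hT_vol hD_vol
    _ = volume (T ∪ D) := (measure_union₀' hT_meas.nullMeasurableSet hTD).symm
    _ ≤ _ := measure_mono (union_subset hTK hDK)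

theorem hull_disk_origin_area_far (c : EuclideanSpace ℝ (Fin 2)) (hc : 1.4 ≤ ‖c‖ ^ 2) :
    (volume (convexHull ℝ ({(0 : EuclideanSpace ℝ (Fin 2))} ∪
        Metric.closedBall c (1 / 6)))).toReal > 0.23 := by
  have hc_norm : 1.18 ≤ ‖c‖ := by nlinarith [norm_nonneg c]
  have hc0 : c ≠ 0 := norm_pos_iff.1 (by linarith)
  have hfin : volume (convexHull ℝ ({(0 : E²)} ∪ closedBall c (1 / 6))) ≠ ⊤ :=
    (isBounded_convexHull.2
      (Bornology.isBounded_singleton.union isBounded_closedBall)).measure_lt_top.ne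
  refine (ENNReal.ofReal_lt_iff_lt_toReal (by norm_num) hfin).1 (lt_of_lt_of_le ?_
    (ofReal_le_volume_convexHull_zero_union_closedBall hc0 (by norm_num)))
  rw [ENNReal.ofReal_lt_ofReal_iff (by positivity)]
  linarith [pi_gt_three]
end

section
/- For every real α with π/4 ≤ α ≤ 74.838·π/180, one has (1/6)·((1/2)·cos(α − 80.504·π/180) + cos(α − π/4)) ≥ 0.2274987. -/
/-!
`f(a) = ½ cos(a - β) + cos(a - π/4)` is a sinusoid in `a`. By the sum-to-product formula,
`f(a) - f(b) = -2 sin((a - b)/2) · (½ sin(m - β) + sin(m - π/4))` with `m = (a + b)/2`, and for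
`b = 74.838°` the bracket is positive on the whole range of `m`, so the minimum is attained at the
right endpoint. The value there exceeds `6 · 0.2274987` by only about `6 · 10⁻⁷`, which the
alternating-series bound `cos x ≥ 1 - x²/2 + x⁴/24 - x⁶/720` is sharp enough to certify.
-/

open Real Finset Filter Nat

theorem Real.sum_range_two_mul_cos_series_le_cos {x : ℝ} (hx : x ^ 2 ≤ 2) (k : ℕ) :
    ∑ i ∈ range (2 * k), (-1) ^ i * (x ^ (2 * i) / (2 * i)!) ≤ cos x := by
  have hsum : Tendsto (fun n ↦ ∑ i ∈ range n, (-1) ^ i * (x ^ (2 * i) / (2 * i)!)) atTop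
      (nhds (cos x)) := by
    simpa only [mul_div_assoc] using (Real.hasSum_cos x).tendsto_sum_nat
  refine Antitone.alternating_series_le_tendsto hsum (antitone_nat_of_succ_le fun n ↦ ?_) k
  have hstep : x ^ (2 * (n + 1)) / (2 * (n + 1))! =
      x ^ (2 * n) / (2 * n)! * (x ^ 2 / ((2 * n + 1) * (2 * n + 2))) := by
    rw [show 2 * (n + 1) = 2 * n + 1 + 1 by ring, Nat.factorial_succ, Nat.factorial_succ]
    push_cast
    field_simp
    ring
  rw [hstep]
  refine mul_le_of_le_one_right (by rw [pow_mul]; positivity) ((div_le_one (by positivity)).2 ?_)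
  nlinarith [(Nat.cast_nonneg n : (0 : ℝ) ≤ n)]

theorem Real.one_sub_sq_div_two_add_pow_four_div_sub_pow_six_div_le_cos {x : ℝ} (hx : x ^ 2 ≤ 2) :
    1 - x ^ 2 / 2 + x ^ 4 / 24 - x ^ 6 / 720 ≤ cos x := by
  have := Real.sum_range_two_mul_cos_series_le_cos hx 2
  norm_num [Finset.sum_range_succ, Nat.factorial] at this
  linarith

theorem Real.mul_cos_sub_add_mul_cos_sub_le {p q β γ x b : ℝ} (hxb : x ≤ b) (hbx : b ≤ x + 2 * π)
    (h : 0 ≤ p * sin ((x + b) / 2 - β) + q * sin ((x + b) / 2 - γ)) :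
    p * cos (b - β) + q * cos (b - γ) ≤ p * cos (x - β) + q * cos (x - γ) := by
  have hsin : sin ((x - b) / 2) ≤ 0 :=
    sin_nonpos_of_nonpos_of_neg_pi_le (by linarith) (by linarith)
  have hdiff : p * cos (x - β) + q * cos (x - γ) - (p * cos (b - β) + q * cos (b - γ)) =
      -2 * sin ((x - b) / 2) * (p * sin ((x + b) / 2 - β) + q * sin ((x + b) / 2 - γ)) := by
    rw [show p * cos (x - β) + q * cos (x - γ) - (p * cos (b - β) + q * cos (b - γ)) =
      p * (cos (x - β) - cos (b - β)) + q * (cos (x - γ) - cos (b - γ)) by ring,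
      cos_sub_cos, cos_sub_cos]
    ring_nf
  nlinarith

theorem half_sin_sub_add_sin_sub_nonneg {m : ℝ} (h1 : (π / 4 + 74.838 * π / 180) / 2 ≤ m)
    (h2 : m ≤ 74.838 * π / 180) :
    0 ≤ 1 / 2 * sin (m - 80.504 * π / 180) + sin (m - π / 4) := by
  have hπ := pi_gt_three
  have hπ' := pi_lt_four
  have hpos : sin (14.919 * π / 180) ≤ sin (m - π / 4) :=
    sin_le_sin_of_le_of_le_pi_div_two (by linarith) (by linarith) (by linarith)
  have hneg : sin (-(20.585 * π / 180)) ≤ sin (m - 80.504 * π / 180) :=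
    sin_le_sin_of_le_of_le_pi_div_two (by linarith) (by linarith) (by linarith)
  rw [sin_neg] at hneg
  have hcube := sin_ge_sub_cube (x := 14.919 * π / 180) (by positivity)
  have hlin := sin_le (x := 20.585 * π / 180) (by positivity)
  have hsmall : (14.919 * π / 180) ^ 3 ≤ 14.919 * π / 180 / 4 := by
    have h0 : 0 ≤ 14.919 * π / 180 := by positivity
    have h1 : 14.919 * π / 180 ≤ 1 / 2 := by linarith
    nlinarith [mul_le_mul h1 h1 h0 (by norm_num)]
  linarith

theorem half_cos_add_cos_at_endpoint_ge :
    1.3649922 ≤ 1 / 2 * cos (5.666 * π / 180) + cos (29.838 * π / 180) := by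
  have hπ := pi_lt_d6
  have cos_ge (c : ℝ) (hc : 0 ≤ c) (hc' : c ≤ 30) :
      cos (c * 3.141593 / 180) ≤ cos (c * π / 180) :=
    cos_le_cos_of_nonneg_of_le_pi (by positivity) (by nlinarith [pi_gt_three]) (by gcongr)
  have h5 := one_sub_sq_div_two_add_pow_four_div_sub_pow_six_div_le_cos
    (x := 5.666 * 3.141593 / 180) (by norm_num)
  have h29 := one_sub_sq_div_two_add_pow_four_div_sub_pow_six_div_le_cos
    (x := 29.838 * 3.141593 / 180) (by norm_num)
  have := cos_ge 5.666 (by norm_num) (by norm_num)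
  have := cos_ge 29.838 (by norm_num) (by norm_num)
  norm_num at h5 h29
  linarith

theorem f_lower_bound (a : ℝ) (h1 : Real.pi / 4 ≤ a) (h2 : a ≤ 74.838 * Real.pi / 180) :
    1 / 6 * (1 / 2 * Real.cos (a - 80.504 * Real.pi / 180) + Real.cos (a - Real.pi / 4)) ≥
      0.2274987 := by
  have hbracket := half_sin_sub_add_sin_sub_nonneg (m := (a + 74.838 * π / 180) / 2)
    (by linarith) (by linarith)
  have hmin := mul_cos_sub_add_mul_cos_sub_le (p := 1 / 2) (q := 1) (β := 80.504 * π / 180)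
    (γ := π / 4) h2 (by linarith [pi_pos]) (by rwa [one_mul])
  rw [one_mul, one_mul, show 74.838 * π / 180 - 80.504 * π / 180 = -(5.666 * π / 180) by ring,
    cos_neg, show 74.838 * π / 180 - π / 4 = 29.838 * π / 180 by ring] at hmin
  linarith [half_cos_add_cos_at_endpoint_ge]
end
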